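/- Let Ω ⊆ ℝ^5 be open and let θ : Ω → ℝ be smooth satisfying the second heavenly hierarchy equations: θ₁₄ − θ₂₃ + θ₁₁θ₂₂ − θ₁₂² = 0, θ₁₅ − θ₃₃ + θ₁₁θ₂₃ − θ₁₂θ₁₃ = 0, θ₂₅ − θ₃₄ + θ₁₂θ₂₃ − θ₂₂θ₁₃ = 0 on Ω. Then the functions u := −∂θ/∂x¹, v := ∂θ/∂x², w := 0 satisfy all nine equations of the system (triple) on Ω: Q₁(u) = w₁, Q₁(v) = −w₂, Q₁(w) = 0, Q₂(u) = −u₁w₁, Q₂(v) = u₁w₂, Q₂(w) = −w₁², Q₃(u) = −w₃ − u₁w₂, Q₃(v) = w₄ + v₂w₁ − (v₁−u₂)w₂, Q₃(w) = −w₁w₂, where Q₁ = ∂₂∂₃ − ∂₁∂₄ + u₁∂₂² + (v₁−u₂)∂₁∂₂ − v₂∂₁², Q₂ = ∂₃² − ∂₁∂₅ + u₁∂₂∂₃ + v₁∂₁∂₃ − u₃∂₁∂₂ + (w−v₃)∂₁², Q₃ = ∂₃∂₄ − ∂₂∂₅ + u₂∂₂∂₃ − u₃∂₂² + v₂∂₁∂₃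 + (w−v₃)∂₁∂₂. -/

import Mathlib

/-
With `w = 0`, `u = −θ₁` and `v = θ₂`, the coefficients of each operator `Qᵢ` are exactly the
linearization of the quadratic terms of the `i`-th heavenly equation `Hᵢ(θ) = 0`. Hence, once
third partial derivatives of `θ` are known to be symmetric, `Qᵢ(θₖ) = −∂ₖ Hᵢ(θ)`, so
`Qᵢ(u) = ∂₁Hᵢ(θ)` and `Qᵢ(v) = −∂₂Hᵢ(θ)` vanish on the open set where `Hᵢ(θ) = 0`; all
right-hand sides vanish because `w = 0`.
-/

/-- The `i`-th standard coordinate (basis) vector of `ℝᵐ`. -/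
noncomputable def e (m : ℕ) (i : Fin m) : Fin m → ℝ := Pi.single i 1

/-- Partial derivative `∂f/∂xⁱ` of a scalar function on `ℝᵐ`. -/
noncomputable def pd (m : ℕ) (f : (Fin m → ℝ) → ℝ) (i : Fin m) (x : Fin m → ℝ) : ℝ :=
  fderiv ℝ f x (e m i)

/-- Second partial derivative `∂²f/∂xⁱ∂xʲ`. -/
noncomputable def pd2 (m : ℕ) (f : (Fin m → ℝ) → ℝ) (i j : Fin m) (x : Fin m → ℝ) : ℝ :=
  pd m (fun y => pd m f i y) j x

/-- Lie bracket of vector fields on (an open subset of) `ℝᵐ`: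
`[X,Y](x) = DY(x)·X(x) − DX(x)·Y(x)`. -/
noncomputable def vbr (m : ℕ) (X Y : (Fin m → ℝ) → (Fin m → ℝ)) (x : Fin m → ℝ) :
    Fin m → ℝ :=
  fderiv ℝ Y x (X x) - fderiv ℝ X x (Y x)

/-- `Q₁ = ∂₂∂₃ − ∂₁∂₄ + u₁∂₂² + (v₁−u₂)∂₁∂₂ − v₂∂₁²`. -/
noncomputable def Q1op (u v f : (Fin 5 → ℝ) → ℝ) (x : Fin 5 → ℝ) : ℝ :=
  pd2 5 f 1 2 x - pd2 5 f 0 3 x + pd 5 u 0 x * pd2 5 f 1 1 x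
  + (pd 5 v 0 x - pd 5 u 1 x) * pd2 5 f 0 1 x - pd 5 v 1 x * pd2 5 f 0 0 x

/-- `Q₂ = ∂₃² − ∂₁∂₅ + u₁∂₂∂₃ + v₁∂₁∂₃ − u₃∂₁∂₂ + (w−v₃)∂₁²`. -/
noncomputable def Q2op (u v w f : (Fin 5 → ℝ) → ℝ) (x : Fin 5 → ℝ) : ℝ :=
  pd2 5 f 2 2 x - pd2 5 f 0 4 x + pd 5 u 0 x * pd2 5 f 1 2 x
  + pd 5 v 0 x * pd2 5 f 0 2 x - pd 5 u 2 x * pd2 5 f 0 1 x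
  + (w x - pd 5 v 2 x) * pd2 5 f 0 0 x

/-- `Q₃ = ∂₃∂₄ − ∂₂∂₅ + u₂∂₂∂₃ − u₃∂₂² + v₂∂₁∂₃ + (w−v₃)∂₁∂₂`. -/
noncomputable def Q3op (u v w f : (Fin 5 → ℝ) → ℝ) (x : Fin 5 → ℝ) : ℝ :=
  pd2 5 f 2 3 x - pd2 5 f 1 4 x + pd 5 u 1 x * pd2 5 f 1 2 x
  - pd 5 u 2 x * pd2 5 f 1 1 x + pd 5 v 1 x * pd2 5 f 0 2 x
  + (w x - pd 5 v 2 x) * pd2 5 f 0 1 x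


open Filter Topology

section PartialDerivatives

variable {m : ℕ} {f g : (Fin m → ℝ) → ℝ} {x : Fin m → ℝ} {i j : Fin m}

lemma pd_neg (f : (Fin m → ℝ) → ℝ) (i : Fin m) (x : Fin m → ℝ) :
    pd m (fun y => -f y) i x = -pd m f i x := by
  simp [pd]

lemma pd_const (c : ℝ) (i : Fin m) (x : Fin m → ℝ) : pd m (fun _ => c) i x = 0 := by
  simp [pd]

lemma pd_add (hf : DifferentiableAt ℝ f x) (hg : DifferentiableAt ℝ g x) :
    pd m (fun y => f y + g y) i x = pd m f i x + pd m g i x := by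
  simp [pd, fderiv_fun_add hf hg]

lemma pd_sub (hf : DifferentiableAt ℝ f x) (hg : DifferentiableAt ℝ g x) :
    pd m (fun y => f y - g y) i x = pd m f i x - pd m g i x := by
  simp [pd, fderiv_fun_sub hf hg]

lemma pd_mul (hf : DifferentiableAt ℝ f x) (hg : DifferentiableAt ℝ g x) :
    pd m (fun y => f y * g y) i x = f x * pd m g i x + pd m f i x * g x := by
  simp [pd, fderiv_fun_mul hf hg, mul_comm]

lemma pd_pow_two (hf : DifferentiableAt ℝ f x) :
    pd m (fun y => f y ^ 2) i x = 2 * f x * pd m f i x := by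
  simp [pd, fderiv_fun_pow 2 hf]

lemma pd2_neg (f : (Fin m → ℝ) → ℝ) (i j : Fin m) (x : Fin m → ℝ) :
    pd2 m (fun y => -f y) i j x = -pd2 m f i j x := by
  simp only [pd2, pd_neg]

lemma pd2_const (c : ℝ) (i j : Fin m) (x : Fin m → ℝ) : pd2 m (fun _ => c) i j x = 0 := by
  simp only [pd2, pd_const]

lemma pd_eq_zero_of_eqOn_zero {s : Set (Fin m → ℝ)} (hs : IsOpen s) (hf : ∀ y ∈ s, f y = 0)
    (hx : x ∈ s) (i : Fin m) : pd m f i x = 0 := by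
  have : f =ᶠ[𝓝 x] fun _ => 0 := eventually_of_mem (hs.mem_nhds hx) hf
  rw [pd, this.fderiv_eq]; simp

lemma ContDiffAt.pd {n k : WithTop ℕ∞} (hf : ContDiffAt ℝ n f x) (hkn : k + 1 ≤ n)
    (i : Fin m) :
    ContDiffAt ℝ k (pd m f i) x :=
  (hf.fderiv_right hkn).clm_apply contDiffAt_const

lemma pd2_comm (hf : ContDiffAt ℝ 2 f x) (i j : Fin m) : pd2 m f i j x = pd2 m f j i x := by
  have hdf : DifferentiableAt ℝ (fderiv ℝ f) x :=
    (hf.fderiv_right le_rfl).differentiableAt one_ne_zero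
  have key : ∀ a b : Fin m, pd2 m f a b x = fderiv ℝ (fderiv ℝ f) x (e m b) (e m a) := by
    intro a b
    simp [pd2, pd, fderiv_clm_apply hdf (differentiableAt_const _)]
  rw [key, key, hf.isSymmSndFDerivAt (by simp)]

lemma pd_pd (f : (Fin m → ℝ) → ℝ) (i j : Fin m) (x : Fin m → ℝ) :
    pd m (pd m f i) j x = pd2 m f i j x := rfl

lemma pd_pd2 (f : (Fin m → ℝ) → ℝ) (i j k : Fin m) (x : Fin m → ℝ) :
    pd m (pd2 m f i j) k x = pd2 m (pd m f i) j k x := rfl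

section ThirdOrder

variable (hf : ContDiffAt ℝ 3 f x)
include hf

lemma differentiableAt_pd2 (i j : Fin m) : DifferentiableAt ℝ (pd2 m f i j) x :=
  ((hf.pd (k := 2) (by norm_num) i).pd (k := 1) (by norm_num) j).differentiableAt one_ne_zero

lemma pd3_comm₁₂ (i j k : Fin m) : pd2 m (pd m f i) j k x = pd2 m (pd m f j) i k x := by
  have : pd2 m f i j =ᶠ[𝓝 x] pd2 m f j i :=
    (hf.eventually (by simp)).mono fun y hy => pd2_comm (hy.of_le (by norm_num)) i j
  rw [← pd_pd2, ← pd_pd2, pd, pd, this.fderiv_eq]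

lemma pd3_comm₂₃ (i j k : Fin m) : pd2 m (pd m f i) j k x = pd2 m (pd m f i) k j x :=
  pd2_comm (hf.pd (by norm_num) i) j k

end ThirdOrder

end PartialDerivatives

noncomputable def secondHeavenly₁ (θ : (Fin 5 → ℝ) → ℝ) (x : Fin 5 → ℝ) : ℝ :=
  pd2 5 θ 0 3 x - pd2 5 θ 1 2 x + pd2 5 θ 0 0 x * pd2 5 θ 1 1 x - pd2 5 θ 0 1 x ^ 2

noncomputable def secondHeavenly₂ (θ : (Fin 5 → ℝ) → ℝ) (x : Fin 5 → ℝ) : ℝ :=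
  pd2 5 θ 0 4 x - pd2 5 θ 2 2 x + pd2 5 θ 0 0 x * pd2 5 θ 1 2 x - pd2 5 θ 0 1 x * pd2 5 θ 0 2 x

noncomputable def secondHeavenly₃ (θ : (Fin 5 → ℝ) → ℝ) (x : Fin 5 → ℝ) : ℝ :=
  pd2 5 θ 1 4 x - pd2 5 θ 2 3 x + pd2 5 θ 0 1 x * pd2 5 θ 1 2 x - pd2 5 θ 1 1 x * pd2 5 θ 0 2 x

section LinearizedOperators

variable (u v w : (Fin 5 → ℝ) → ℝ) (f : (Fin 5 → ℝ) → ℝ) (x : Fin 5 → ℝ)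

lemma Q1op_neg : Q1op u v (fun y => -f y) x = -Q1op u v f x := by
  simp only [Q1op, pd2_neg]; ring

lemma Q2op_neg : Q2op u v w (fun y => -f y) x = -Q2op u v w f x := by
  simp only [Q2op, pd2_neg]; ring

lemma Q3op_neg : Q3op u v w (fun y => -f y) x = -Q3op u v w f x := by
  simp only [Q3op, pd2_neg]; ring

lemma Q1op_const (c : ℝ) : Q1op u v (fun _ => c) x = 0 := by
  simp only [Q1op, pd2_const]; ring

lemma Q2op_const (c : ℝ) : Q2op u v w (fun _ => c) x = 0 := by
  simp only [Q2op, pd2_const]; ring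

lemma Q3op_const (c : ℝ) : Q3op u v w (fun _ => c) x = 0 := by
  simp only [Q3op, pd2_const]; ring

end LinearizedOperators

section Reduction

variable {θ : (Fin 5 → ℝ) → ℝ} {x : Fin 5 → ℝ} (hθ : ContDiffAt ℝ 3 θ x) (k : Fin 5)
include hθ

lemma Q1op_pd_eq_neg_pd_secondHeavenly₁ :
    Q1op (fun y => -pd 5 θ 0 y) (fun y => pd 5 θ 1 y) (pd 5 θ k) x
      = -pd 5 (secondHeavenly₁ θ) k x := by
  have hd := differentiableAt_pd2 hθ
  have h2 := pd2_comm (hθ.of_le (by norm_num))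
  unfold secondHeavenly₁
  simp (disch := fun_prop) only [pd_sub, pd_add, pd_mul, pd_pow_two]
  -- the symmetry lemmas are permutation rules, so `simp` sorts the indices of every
  -- second and third partial derivative into one canonical order
  simp only [Q1op, pd_neg, pd_pd, pd_pd2, pd3_comm₁₂ hθ, pd3_comm₂₃ hθ, h2]
  ring

lemma Q2op_pd_eq_neg_pd_secondHeavenly₂ :
    Q2op (fun y => -pd 5 θ 0 y) (fun y => pd 5 θ 1 y) (fun _ => 0) (pd 5 θ k) x
      = -pd 5 (secondHeavenly₂ θ) k x := by
  have hd := differentiableAt_pd2 hθ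
  have h2 := pd2_comm (hθ.of_le (by norm_num))
  unfold secondHeavenly₂
  simp (disch := fun_prop) only [pd_sub, pd_add, pd_mul]
  simp only [Q2op, pd_neg, pd_pd, pd_pd2, pd3_comm₁₂ hθ, pd3_comm₂₃ hθ, h2]
  ring

lemma Q3op_pd_eq_neg_pd_secondHeavenly₃ :
    Q3op (fun y => -pd 5 θ 0 y) (fun y => pd 5 θ 1 y) (fun _ => 0) (pd 5 θ k) x
      = -pd 5 (secondHeavenly₃ θ) k x := by
  have hd := differentiableAt_pd2 hθ
  unfold secondHeavenly₃
  simp (disch := fun_prop) only [pd_sub, pd_add, pd_mul]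
  simp only [Q3op, pd_neg, pd_pd, pd_pd2, pd3_comm₁₂ hθ, pd3_comm₂₃ hθ]
  ring

end Reduction

/-- Reduction (b): a solution `θ` of the second heavenly hierarchy yields a
solution `u = −θ₁`, `v = θ₂`, `w = 0` of the system (triple) of the hierarchy of
conformal self-duality equations (coordinates `x¹,…,x⁵` indexed by `0,…,4`). -/
theorem stmt_19 (Ω : Set (Fin 5 → ℝ)) (hΩ : IsOpen Ω)
    (θ : (Fin 5 → ℝ) → ℝ) (hθ : ContDiffOn ℝ (⊤:ℕ∞) θ Ω)
    (h1 : ∀ x ∈ Ω, pd2 5 θ 0 3 x - pd2 5 θ 1 2 x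
        + pd2 5 θ 0 0 x * pd2 5 θ 1 1 x - pd2 5 θ 0 1 x ^ 2 = 0)
    (h2 : ∀ x ∈ Ω, pd2 5 θ 0 4 x - pd2 5 θ 2 2 x
        + pd2 5 θ 0 0 x * pd2 5 θ 1 2 x - pd2 5 θ 0 1 x * pd2 5 θ 0 2 x = 0)
    (h3 : ∀ x ∈ Ω, pd2 5 θ 1 4 x - pd2 5 θ 2 3 x
        + pd2 5 θ 0 1 x * pd2 5 θ 1 2 x - pd2 5 θ 1 1 x * pd2 5 θ 0 2 x = 0)
    (u v w : (Fin 5 → ℝ) → ℝ)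
    (hu : u = fun x => -(pd 5 θ 0 x))
    (hv : v = fun x => pd 5 θ 1 x)
    (hw : w = fun _ => 0) :
    ∀ x ∈ Ω,
      Q1op u v u x = pd 5 w 0 x
      ∧ Q1op u v v x = -pd 5 w 1 x
      ∧ Q1op u v w x = 0
      ∧ Q2op u v w u x = -(pd 5 u 0 x * pd 5 w 0 x)
      ∧ Q2op u v w v x = pd 5 u 0 x * pd 5 w 1 x
      ∧ Q2op u v w w x = -(pd 5 w 0 x ^ 2)
      ∧ Q3op u v w u x = -pd 5 w 2 x - pd 5 u 0 x * pd 5 w 1 x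
      ∧ Q3op u v w v x = pd 5 w 3 x + pd 5 v 1 x * pd 5 w 0 x
          - (pd 5 v 0 x - pd 5 u 1 x) * pd 5 w 1 x
      ∧ Q3op u v w w x = -(pd 5 w 0 x * pd 5 w 1 x) := by
  intro x hx
  subst hu hv hw
  have hθx : ContDiffAt ℝ 3 θ x :=
    (hθ.contDiffAt (hΩ.mem_nhds hx)).of_le (WithTop.coe_le_coe.mpr le_top)
  have hH₁ : ∀ k, pd 5 (secondHeavenly₁ θ) k x = 0 :=
    pd_eq_zero_of_eqOn_zero hΩ h1 hx
  have hH₂ : ∀ k, pd 5 (secondHeavenly₂ θ) k x = 0 :=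
    pd_eq_zero_of_eqOn_zero hΩ h2 hx
  have hH₃ : ∀ k, pd 5 (secondHeavenly₃ θ) k x = 0 :=
    pd_eq_zero_of_eqOn_zero hΩ h3 hx
  simp [pd_const, Q1op_neg, Q2op_neg, Q3op_neg, Q1op_const, Q2op_const, Q3op_const,
    Q1op_pd_eq_neg_pd_secondHeavenly₁ hθx, Q2op_pd_eq_neg_pd_secondHeavenly₂ hθx,
    Q3op_pd_eq_neg_pd_secondHeavenly₃ hθx, hH₁, hH₂, hH₃]
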